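/- arXiv:1301.2551 — 3 statements merged into one kernel-verified Lean document; each statement's English description precedes it below -/
import Mathlib

section
/- If η is irrational with finite irrationality measure ν, then there exists a constant C > 0 and K ∈ ℕ such that for all integers k with |k| ≥ K, 1/|e^{2πikη} - 1| ≤ C·|k|^{ν+1}. -/
/-!
Writing `‖e^{2πix} - 1‖ = 2|sin πx|` and using Jordan's inequality `|sin πy| ≥ 2|y|` for
`|y| ≤ 1/2` with `y = x - round x`, one gets `‖e^{2πix} - 1‖ ≥ 4‖x‖`, where `‖x‖` is the
distance from `x` to the nearest integer. For `x = kη` the irrationality measure gives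
`‖kη‖ = |k|·|η - p/k| ≥ |k|^{1-ν}`, hence `1/‖e^{2πikη} - 1‖ ≤ |k|^{ν-1}/4 ≤ |k|^{ν+1}`.
-/

open Real

lemma Complex.norm_exp_two_pi_I_mul_sub_one (x : ℝ) :
    ‖Complex.exp (2 * π * Complex.I * x) - 1‖ = 2 * |Real.sin (π * x)| := by
  rw [show 2 * π * Complex.I * x = Complex.I * ((2 * π * x : ℝ) : ℂ) by push_cast; ring,
    Complex.norm_exp_I_mul_ofReal_sub_one, norm_mul, Real.norm_two, Real.norm_eq_abs]
  ring_nf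

lemma abs_sin_pi_mul_sub_int (x : ℝ) (p : ℤ) : |sin (π * (x - p))| = |sin (π * x)| := by
  rw [mul_sub, mul_comm π (p : ℝ), sin_sub_int_mul_pi, abs_mul, abs_neg_one_zpow, one_mul]

lemma two_mul_abs_le_abs_sin_pi_mul {y : ℝ} (hy : |y| ≤ 1 / 2) : 2 * |y| ≤ |sin (π * y)| := by
  have hπy : |π * y| ≤ π / 2 := by
    rw [abs_mul, abs_of_pos pi_pos]
    nlinarith [pi_pos]
  calc 2 * |y| = 2 / π * |π * y| := by
        rw [abs_mul, abs_of_pos pi_pos]; field_simp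
    _ ≤ |sin (π * y)| := mul_abs_le_abs_sin hπy

lemma four_mul_abs_sub_round_le_norm_exp_sub_one (x : ℝ) :
    4 * |x - round x| ≤ ‖Complex.exp (2 * π * Complex.I * x) - 1‖ := by
  rw [Complex.norm_exp_two_pi_I_mul_sub_one, ← abs_sin_pi_mul_sub_int x (round x)]
  linarith [two_mul_abs_le_abs_sin_pi_mul (abs_sub_round x)]

section IrrationalityMeasure

variable {η ν : ℝ} {K₀ : ℕ}

lemma rpow_one_sub_le_abs_natCast_mul_sub
    (hmeas : ∀ k : ℕ, K₀ ≤ k → ∀ p : ℤ, 1 / (k : ℝ) ^ ν ≤ |η - (p : ℝ) / (k : ℝ)|)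
    {n : ℕ} (hn : K₀ ≤ n) (hn0 : 0 < n) (p : ℤ) :
    (n : ℝ) ^ (1 - ν) ≤ |n * η - p| := by
  have hn0' : (0 : ℝ) < n := by exact_mod_cast hn0
  calc (n : ℝ) ^ (1 - ν) = n * (1 / (n : ℝ) ^ ν) := by
        rw [rpow_sub hn0', rpow_one, mul_one_div]
    _ ≤ n * |η - p / n| := mul_le_mul_of_nonneg_left (hmeas n hn p) hn0'.le
    _ = |n * η - p| := by
        rw [← abs_of_pos hn0', ← abs_mul, abs_of_pos hn0', mul_sub, mul_div_cancel₀ _ hn0'.ne']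

lemma rpow_one_sub_le_abs_intCast_mul_sub
    (hmeas : ∀ k : ℕ, K₀ ≤ k → ∀ p : ℤ, 1 / (k : ℝ) ^ ν ≤ |η - (p : ℝ) / (k : ℝ)|)
    {k : ℤ} (hk : K₀ ≤ k.natAbs) (hk0 : k ≠ 0) (p : ℤ) :
    |(k : ℝ)| ^ (1 - ν) ≤ |k * η - p| := by
  obtain ⟨n, rfl | rfl⟩ := Int.eq_nat_or_neg k
  · simpa using rpow_one_sub_le_abs_natCast_mul_sub hmeas hk (by omega) p
  · have h := rpow_one_sub_le_abs_natCast_mul_sub hmeas (by simpa using hk) (by omega) (-p)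
    have hneg : ((-(n : ℤ) : ℤ) : ℝ) * η - p = -(n * η - ((-p : ℤ) : ℝ)) := by push_cast; ring
    rwa [hneg, abs_neg, Int.cast_neg, abs_neg, Int.cast_natCast, Nat.abs_cast]

end IrrationalityMeasure

theorem stmt_2_general (η ν : ℝ)
    (hmeas : ∃ K₀ : ℕ, ∀ k : ℕ, K₀ ≤ k → ∀ p : ℤ,
      1 / (k : ℝ) ^ ν ≤ |η - (p : ℝ) / (k : ℝ)|) :
    ∃ C : ℝ, 0 < C ∧ ∃ K : ℕ, ∀ k : ℤ, (K : ℝ) ≤ |(k : ℝ)| →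
      1 / ‖Complex.exp (2 * (Real.pi : ℂ) * Complex.I * (k : ℂ) * (η : ℂ)) - 1‖ ≤
        C * |(k : ℝ)| ^ (ν + 1) := by
  obtain ⟨K₀, hK₀⟩ := hmeas
  refine ⟨1, one_pos, max K₀ 1, fun k hk => ?_⟩
  have hk1 : (1 : ℝ) ≤ |(k : ℝ)| := le_trans (by exact_mod_cast le_max_right K₀ 1) hk
  have hk0 : (0 : ℝ) < |(k : ℝ)| := by linarith
  have hkK : max K₀ 1 ≤ k.natAbs := by
    rw [← Int.cast_abs, ← Nat.cast_natAbs] at hk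
    exact_mod_cast hk
  have hdioph : 4 * |(k : ℝ)| ^ (1 - ν) ≤
      ‖Complex.exp (2 * π * Complex.I * (k : ℂ) * η) - 1‖ := by
    have h := four_mul_abs_sub_round_le_norm_exp_sub_one (k * η)
    push_cast at h
    rw [← mul_assoc] at h
    linarith [rpow_one_sub_le_abs_intCast_mul_sub hK₀ (le_of_max_le_left hkK) (by omega)
      (round ((k : ℝ) * η))]
  have hpow : |(k : ℝ)| ^ (1 - ν) * |(k : ℝ)| ^ (ν + 1) = |(k : ℝ)| ^ 2 := by
    rw [← rpow_add hk0, ← rpow_natCast]; ring_nf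
  rw [one_mul, div_le_iff₀ (by linarith [rpow_pos_of_pos hk0 (1 - ν)])]
  calc (1 : ℝ) ≤ 4 * |(k : ℝ)| ^ 2 := by nlinarith
    _ = |(k : ℝ)| ^ (ν + 1) * (4 * |(k : ℝ)| ^ (1 - ν)) := by rw [← hpow]; ring
    _ ≤ |(k : ℝ)| ^ (ν + 1) * ‖Complex.exp (2 * π * Complex.I * (k : ℂ) * η) - 1‖ :=
      mul_le_mul_of_nonneg_left hdioph (rpow_nonneg hk0.le _)

/-- If `η` is irrational with finite irrationality measure `ν`
(encoded by `|η - p/k| ≥ 1/k^ν` for all sufficiently large positive integers `k`),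
then there exist `C > 0` and `K ∈ ℕ` such that for all integers `k` with `|k| ≥ K`,
`1/|e^{2πikη} - 1| ≤ C·|k|^(ν+1)`. -/
theorem stmt_2 (η ν : ℝ) (hη : Irrational η)
    (hmeas : ∃ K₀ : ℕ, ∀ k : ℕ, K₀ ≤ k → ∀ p : ℤ,
      1 / (k : ℝ) ^ ν ≤ |η - (p : ℝ) / (k : ℝ)|) :
    ∃ C : ℝ, 0 < C ∧ ∃ K : ℕ, ∀ k : ℤ, (K : ℝ) ≤ |(k : ℝ)| →
      1 / ‖Complex.exp (2 * (Real.pi : ℂ) * Complex.I * (k : ℂ) * (η : ℂ)) - 1‖ ≤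
        C * |(k : ℝ)| ^ (ν + 1) :=
  stmt_2_general η ν hmeas
end

section
/- Let η be a Liouville number and let (k_s)_{s≥1} be a strictly increasing sequence of positive integers with |η - p_s/k_s| < 1/k_s^s for some integers p_s. Define the sequence w_l = 1/k_s^{s-1} if l = k_s for some s, and w_l = 0 otherwise, for l ≥ 1. Then (w_l) has rapid decay, but the sequence v defined by v_{k_s} = w_{k_s}/(e^{πik_sη} - e^{-πik_sη}) satisfies |v_{k_s}| ≥ 1/(2π) for all s; in particular (v_k) does not tend to 0 and hence is not of rapid decay. -/
/-!
The denominator is `2i sin(π k_s η)`, and `|sin(πx)| ≤ π|x - p|` for every integer `p`, so the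
Liouville approximation `|k_s η - p_s| < k_s^{1-s}` makes it smaller than `2π w_{k_s}`; it is
nonzero because `k_s η` is irrational. The sequence `w` decays rapidly because
`k_s^q ≤ k_s^{s-1}` as soon as `s > q`, while the terms with `s ≤ q` are bounded by `k_q^q`.
-/

open Real Filter

lemma Complex.exp_mul_I_sub_exp_neg_mul_I (z : ℂ) :
    exp (z * I) - exp (-(z * I)) = 2 * I * sin z := by
  rw [mul_assoc, mul_comm I, ← mul_assoc, two_sin, neg_mul]
  ring_nf
  rw [I_sq]
  ring

lemma Complex.norm_exp_mul_I_sub_exp_neg_mul_I (θ : ℝ) :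
    ‖exp (θ * I) - exp (-(θ * I))‖ = 2 * |Real.sin θ| := by
  rw [exp_mul_I_sub_exp_neg_mul_I, ← ofReal_sin, norm_mul, norm_mul, Complex.norm_two, norm_I,
    norm_real, Real.norm_eq_abs, mul_one]

lemma Real.abs_sin_pi_mul_le (x : ℝ) (n : ℤ) : |sin (π * x)| ≤ π * |x - n| :=
  calc |sin (π * x)| = |sin (π * x - n * π)| := by
        rw [sin_sub_int_mul_pi, abs_mul, abs_neg_one_zpow, one_mul]
    _ ≤ |π * (x - n)| := by rw [mul_sub, mul_comm π (n : ℝ)]; exact abs_sin_le_abs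
    _ = π * |x - n| := by rw [abs_mul, abs_of_pos pi_pos]

lemma Irrational.sin_pi_mul_ne_zero {x : ℝ} (hx : Irrational x) : sin (π * x) ≠ 0 := by
  rw [Ne, sin_eq_zero_iff]
  rintro ⟨n, hn⟩
  exact hx.ne_int n (mul_left_cancel₀ pi_ne_zero (by linarith)).symm

lemma abs_natCast_mul_sub_lt {η : ℝ} {k : ℕ} (hk : 0 < k) {p : ℤ} {s : ℕ}
    (h : |η - p / k| < 1 / (k : ℝ) ^ s) : |k * η - p| < 1 / (k : ℝ) ^ ((s : ℝ) - 1) := by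
  have hk' : (0 : ℝ) < k := Nat.cast_pos.mpr hk
  calc |k * η - p| = |k * (η - p / k)| := by rw [mul_sub, mul_div_cancel₀ _ hk'.ne']
    _ = k * |η - p / k| := by rw [abs_mul, abs_of_pos hk']
    _ < k * (1 / (k : ℝ) ^ s) := by gcongr
    _ = 1 / (k : ℝ) ^ ((s : ℝ) - 1) := by
        rw [rpow_sub_one hk'.ne', rpow_natCast]; field_simp

lemma inv_two_pi_le_norm_div_exp_sub_exp_neg {η : ℝ} (hη : Irrational η) {k : ℕ} (hk : 0 < k)
    {p : ℤ} {s : ℕ} (h : |η - p / k| < 1 / (k : ℝ) ^ s) :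
    1 / (2 * π) ≤ ‖((1 / (k : ℝ) ^ ((s : ℝ) - 1) : ℝ) : ℂ) /
      (Complex.exp (π * Complex.I * k * η) - Complex.exp (-(π * Complex.I * k * η)))‖ := by
  set a := 1 / (k : ℝ) ^ ((s : ℝ) - 1)
  have ha : 0 ≤ a := by positivity
  have hsin_pos : 0 < |sin (π * (k * η))| :=
    abs_pos.mpr (hη.natCast_mul hk.ne').sin_pi_mul_ne_zero
  have hsin_lt : |sin (π * (k * η))| < π * a :=
    (abs_sin_pi_mul_le _ p).trans_lt
      (mul_lt_mul_of_pos_left (abs_natCast_mul_sub_lt hk h) pi_pos)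
  have hden : ‖Complex.exp (π * Complex.I * k * η) - Complex.exp (-(π * Complex.I * k * η))‖ =
      2 * |sin (π * (k * η))| := by
    rw [← Complex.norm_exp_mul_I_sub_exp_neg_mul_I]
    push_cast
    ring_nf
  rw [norm_div, hden, Complex.norm_real, norm_of_nonneg ha,
    div_le_div_iff₀ (by positivity) (by positivity)]
  linarith

lemma pow_le_max_mul_rpow_of_strictMono {k : ℕ → ℕ} (hk : StrictMono k) (q : ℕ) {s : ℕ}
    (hs : 1 ≤ s) : (k s : ℝ) ^ q ≤ max 1 ((k q : ℝ) ^ q) * (k s : ℝ) ^ ((s : ℝ) - 1) := by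
  have hks : (1 : ℝ) ≤ k s := by exact_mod_cast hs.trans (hk.id_le s)
  have hpow : 1 ≤ (k s : ℝ) ^ ((s : ℝ) - 1) :=
    one_le_rpow hks (sub_nonneg.mpr (Nat.one_le_cast.mpr hs))
  rcases le_or_gt s q with hsq | hqs
  · calc (k s : ℝ) ^ q ≤ (k q : ℝ) ^ q := by gcongr; exact hk.monotone hsq
      _ ≤ max 1 ((k q : ℝ) ^ q) * 1 := by rw [mul_one]; exact le_max_right _ _
      _ ≤ _ := by gcongr
  · calc (k s : ℝ) ^ q = (k s : ℝ) ^ (q : ℝ) := (rpow_natCast _ _).symm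
      _ ≤ (k s : ℝ) ^ ((s : ℝ) - 1) :=
        rpow_le_rpow_of_exponent_le hks (by rw [le_sub_iff_add_le]; exact_mod_cast hqs)
      _ ≤ _ := le_mul_of_one_le_left (by positivity) (le_max_left _ _)

theorem rapid_decay_of_norm_apply_eq {E : Type*} [SeminormedAddCommGroup E] {k : ℕ → ℕ}
    (hk : StrictMono k) {w : ℕ → E}
    (hw : ∀ s, 1 ≤ s → ‖w (k s)‖ = 1 / (k s : ℝ) ^ ((s : ℝ) - 1))
    (hw0 : ∀ l, (∀ s, 1 ≤ s → k s ≠ l) → w l = 0) (q : ℕ) :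
    ∃ C : ℝ, ∀ l : ℕ, 1 ≤ l → ‖w l‖ ≤ C / (l : ℝ) ^ q := by
  refine ⟨max 1 ((k q : ℝ) ^ q), fun l hl => ?_⟩
  by_cases hl_range : ∃ s, 1 ≤ s ∧ k s = l
  · obtain ⟨s, hs, rfl⟩ := hl_range
    rw [hw s hs, div_le_div_iff₀ (by positivity) (by positivity), one_mul]
    exact pow_le_max_mul_rpow_of_strictMono hk q hs
  · push Not at hl_range
    rw [hw0 l hl_range, norm_zero]
    positivity

lemma not_tendsto_zero_of_le_norm {E : Type*} [SeminormedAddCommGroup E] {v : ℕ → E} {c : ℝ}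
    (hc : 0 < c) (hv : ∀ s, 1 ≤ s → c ≤ ‖v s‖) : ¬ Tendsto v atTop (nhds 0) := by
  intro hT
  obtain ⟨s, hs_small, hs⟩ :=
    ((tendsto_zero_iff_norm_tendsto_zero.mp hT).eventually_lt_const hc |>.and
      (eventually_ge_atTop 1)).exists
  exact (hv s hs).not_gt hs_small

theorem stmt_7_general (η : ℝ) (hη : Liouville η)
    (k : ℕ → ℕ) (p : ℕ → ℤ) (hmono : StrictMono k)
    (happrox : ∀ s : ℕ, 1 ≤ s → |η - (p s : ℝ) / (k s : ℝ)| < 1 / (k s : ℝ) ^ s)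
    (w : ℕ → ℂ)
    (hwdef : ∀ s : ℕ, 1 ≤ s → w (k s) = ((1 / (k s : ℝ) ^ ((s : ℝ) - 1) : ℝ) : ℂ))
    (hw0 : ∀ l : ℕ, (∀ s : ℕ, 1 ≤ s → k s ≠ l) → w l = 0)
    (v : ℕ → ℂ)
    (hvdef : ∀ s : ℕ, v s = w (k s) /
      (Complex.exp ((Real.pi : ℂ) * Complex.I * (k s : ℂ) * (η : ℂ)) -
        Complex.exp (-((Real.pi : ℂ) * Complex.I * (k s : ℂ) * (η : ℂ))))) :
    (∀ q : ℕ, ∃ C : ℝ, ∀ l : ℕ, 1 ≤ l → ‖w l‖ ≤ C / (l : ℝ) ^ q) ∧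
    (∀ s : ℕ, 1 ≤ s → 1 / (2 * Real.pi) ≤ ‖v s‖) ∧
    ¬ Filter.Tendsto v Filter.atTop (nhds 0) := by
  have hk_pos : ∀ s, 1 ≤ s → 0 < k s := fun s hs => hs.trans (hmono.id_le s)
  have hw_norm : ∀ s, 1 ≤ s → ‖w (k s)‖ = 1 / (k s : ℝ) ^ ((s : ℝ) - 1) := fun s hs => by
    rw [hwdef s hs, Complex.norm_real, norm_of_nonneg (by positivity)]
  have hv_ge : ∀ s, 1 ≤ s → 1 / (2 * π) ≤ ‖v s‖ := fun s hs => by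
    rw [hvdef s, hwdef s hs]
    exact inv_two_pi_le_norm_div_exp_sub_exp_neg hη.irrational (hk_pos s hs) (happrox s hs)
  exact ⟨rapid_decay_of_norm_apply_eq hmono hw_norm hw0, hv_ge,
    not_tendsto_zero_of_le_norm (by positivity) hv_ge⟩

/-- Let `η` be a Liouville number and `(k_s)_{s≥1}` a strictly increasing
sequence of integers `> 1` with `|η - p_s/k_s| < 1/k_s^s`. Define `w_l = 1/k_s^{s-1}`
if `l = k_s` for some `s ≥ 1` and `w_l = 0` otherwise. Then `(w_l)` has rapid decay,
but `v_s := w_{k_s}/(e^{πik_sη} - e^{-πik_sη})` satisfies `|v_s| ≥ 1/(2π)` for all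
`s ≥ 1`; in particular `(v_s)` does not tend to `0`. -/
theorem stmt_7 (η : ℝ) (hη : Liouville η)
    (k : ℕ → ℕ) (p : ℕ → ℤ) (hmono : StrictMono k) (hk1 : ∀ s, 1 < k s)
    (happrox : ∀ s : ℕ, 1 ≤ s → |η - (p s : ℝ) / (k s : ℝ)| < 1 / (k s : ℝ) ^ s)
    (w : ℕ → ℂ)
    (hwdef : ∀ s : ℕ, 1 ≤ s → w (k s) = ((1 / (k s : ℝ) ^ ((s : ℝ) - 1) : ℝ) : ℂ))
    (hw0 : ∀ l : ℕ, (∀ s : ℕ, 1 ≤ s → k s ≠ l) → w l = 0)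
    (v : ℕ → ℂ)
    (hvdef : ∀ s : ℕ, v s = w (k s) /
      (Complex.exp ((Real.pi : ℂ) * Complex.I * (k s : ℂ) * (η : ℂ)) -
        Complex.exp (-((Real.pi : ℂ) * Complex.I * (k s : ℂ) * (η : ℂ))))) :
    (∀ q : ℕ, ∃ C : ℝ, ∀ l : ℕ, 1 ≤ l → ‖w l‖ ≤ C / (l : ℝ) ^ q) ∧
    (∀ s : ℕ, 1 ≤ s → 1 / (2 * Real.pi) ≤ ‖v s‖) ∧
    ¬ Filter.Tendsto v Filter.atTop (nhds 0) :=
  stmt_7_general η hη k p hmono happrox w hwdef hw0 v hvdef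
end

section
/- Let p be a nonzero integer and suppose a sequence (v_k)_{k∈ℤ} of complex numbers satisfies δ_{0k} = e^{-iθ_k}v_k - e^{iθ_k}v_{k-p} for all k ∈ ℤ, where θ_k = π(kη + p/η) and η is irrational. Then |v_{kp}| = |v_0| for all k ≥ 0 and |v_{kp}| = |v_{-p}| for all k ≤ -1; consequently, if v_0 ≠ 0 or v_{-p} ≠ 0, the sequence (v_k) does not converge to 0. -/
/-!
Since `|e^{±iθ}| = 1`, the recurrence forces `|v_k| = |v_{k-p}|` for every `k ≠ 0`. Walking
along the progression `kp` away from the origin never meets the index `0`, so `|v_{kp}|` is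
constant on `k ≥ 0` and on `k ≤ -1`. Because `k ↦ kp` is injective, `v → 0` along the
cofinite filter makes `|v_{kp}| → 0` as `k → ±∞`, so both constants vanish.
-/

open Filter Topology Complex

lemma norm_eq_of_exp_neg_mul_eq_exp_mul {θ φ : ℝ} {a b : ℂ}
    (h : exp (-(I * θ)) * a = exp (I * φ) * b) : ‖a‖ = ‖b‖ := by
  have hnorm := congrArg (‖·‖) h
  simpa only [norm_mul, ← ofReal_neg, ← mul_neg, norm_exp_I_mul_ofReal, one_mul] using hnorm

section ShiftInvariantAwayFromZero

variable {α : Type*} {w : ℤ → α} {p : ℤ}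

lemma apply_mul_eq_apply_zero_of_nonneg (hp : p ≠ 0) (hw : ∀ k ≠ 0, w k = w (k - p))
    {k : ℤ} (hk : 0 ≤ k) : w (k * p) = w 0 := by
  induction k, hk using Int.leInduction with
  | base => simp
  | succ k hk ih =>
    rw [hw _ (mul_ne_zero (by omega) hp), add_one_mul, add_sub_cancel_right, ih]

lemma apply_mul_eq_apply_neg_of_le_neg_one (hp : p ≠ 0) (hw : ∀ k ≠ 0, w k = w (k - p))
    {k : ℤ} (hk : k ≤ -1) : w (k * p) = w (-p) := by
  induction k, hk using Int.leInductionDown with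
  | base => simp
  | pred k hk ih =>
    rw [sub_one_mul, ← hw (k * p) (mul_ne_zero (by omega) hp), ih]

end ShiftInvariantAwayFromZero

lemma eq_zero_of_tendsto_cofinite_of_eventually_norm_mul_eq {E : Type*} [SeminormedAddGroup E]
    {v : ℤ → E} {p : ℤ} (hp : p ≠ 0) (hv : Tendsto v cofinite (𝓝 0))
    {l : Filter ℤ} [l.NeBot] (hl : l ≤ cofinite) {c : ℝ} (hc : ∀ᶠ k in l, ‖v (k * p)‖ = c) :
    c = 0 := by
  have hlim : Tendsto (fun k => ‖v (k * p)‖) l (𝓝 0) :=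
    tendsto_norm_zero.comp ((hv.comp (mul_left_injective₀ hp).tendsto_cofinite).mono_left hl)
  exact tendsto_nhds_unique (tendsto_const_nhds.congr' (hc.mono fun _ h => h.symm)) hlim

theorem stmt_9_general (η : ℝ) (p : ℤ) (hp : p ≠ 0) (v : ℤ → ℂ)
    (hrec : ∀ k : ℤ, (if k = 0 then (1 : ℂ) else 0) =
      Complex.exp (-(Complex.I * ((Real.pi * ((k : ℝ) * η + (p : ℝ) / η) : ℝ) : ℂ))) * v k -
        Complex.exp (Complex.I * ((Real.pi * ((k : ℝ) * η + (p : ℝ) / η) : ℝ) : ℂ)) *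
          v (k - p)) :
    (∀ k : ℤ, 0 ≤ k → ‖v (k * p)‖ = ‖v 0‖) ∧
    (∀ k : ℤ, k ≤ -1 → ‖v (k * p)‖ = ‖v (-p)‖) ∧
    ((v 0 ≠ 0 ∨ v (-p) ≠ 0) → ¬ Filter.Tendsto v Filter.cofinite (nhds 0)) := by
  have hstep : ∀ k ≠ 0, ‖v k‖ = ‖v (k - p)‖ := by
    intro k hk
    have hk_rec := hrec k
    rw [if_neg hk, eq_comm, sub_eq_zero] at hk_rec
    exact norm_eq_of_exp_neg_mul_eq_exp_mul hk_rec
  have hpos : ∀ k : ℤ, 0 ≤ k → ‖v (k * p)‖ = ‖v 0‖ := fun _ =>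
    apply_mul_eq_apply_zero_of_nonneg (w := (‖v ·‖)) hp hstep
  have hneg : ∀ k : ℤ, k ≤ -1 → ‖v (k * p)‖ = ‖v (-p)‖ := fun _ =>
    apply_mul_eq_apply_neg_of_le_neg_one (w := (‖v ·‖)) hp hstep
  refine ⟨hpos, hneg, ?_⟩
  rintro (h0 | h0) hv
  · exact h0 <| norm_eq_zero.mp <| eq_zero_of_tendsto_cofinite_of_eventually_norm_mul_eq hp hv
      atTop_le_cofinite ((eventually_ge_atTop 0).mono hpos)
  · exact h0 <| norm_eq_zero.mp <| eq_zero_of_tendsto_cofinite_of_eventually_norm_mul_eq hp hv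
      atBot_le_cofinite ((eventually_le_atBot (-1)).mono hneg)

/-- Let `p ≠ 0` be an integer, `η` irrational, `θ_k = π(kη + p/η)`, and
suppose `(v_k)` satisfies `δ_{0k} = e^{-iθ_k}v_k - e^{iθ_k}v_{k-p}` for all `k ∈ ℤ`.
Then `|v_{kp}| = |v_0|` for all `k ≥ 0` and `|v_{kp}| = |v_{-p}|` for all `k ≤ -1`;
consequently if `v_0 ≠ 0` or `v_{-p} ≠ 0` the sequence `(v_k)` does not converge
to `0`. -/
theorem stmt_9 (η : ℝ) (hη : Irrational η) (p : ℤ) (hp : p ≠ 0) (v : ℤ → ℂ)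
    (hrec : ∀ k : ℤ, (if k = 0 then (1 : ℂ) else 0) =
      Complex.exp (-(Complex.I * ((Real.pi * ((k : ℝ) * η + (p : ℝ) / η) : ℝ) : ℂ))) * v k -
        Complex.exp (Complex.I * ((Real.pi * ((k : ℝ) * η + (p : ℝ) / η) : ℝ) : ℂ)) *
          v (k - p)) :
    (∀ k : ℤ, 0 ≤ k → ‖v (k * p)‖ = ‖v 0‖) ∧
    (∀ k : ℤ, k ≤ -1 → ‖v (k * p)‖ = ‖v (-p)‖) ∧
    ((v 0 ≠ 0 ∨ v (-p) ≠ 0) → ¬ Filter.Tendsto v Filter.cofinite (nhds 0)) :=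
  stmt_9_general η p hp v hrec
end
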